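/- arXiv:1604.08797 — 2 statements merged into one kernel-verified Lean document; each statement's English description precedes it below -/
import Mathlib

section
/- Let G_p be a maximal plane graph (triangulation) with n ≥ 13 vertices, and suppose every one of its 2n−4 faces is assigned 3 tokens, with each token of a face placed on one of the three vertices of that face. Then some vertex receives at least 6 tokens. -/
/-- Let `F` be the faces of a maximal plane graph on `n ≥ 13` vertices, so that there
are `2n − 4` faces, each incident to exactly 3 vertices. If every face places 3 tokens,
each token on one of its three incident vertices, then some vertex receives at least
6 tokens. -/
theorem stmt_8 {V F : Type*} [Fintype V] [Fintype F] [DecidableEq V]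
    (n : ℕ) (hn : 13 ≤ n)
    (hV : Fintype.card V = n) (hF : Fintype.card F = 2 * n - 4)
    (inc : F → Finset V) (hinc : ∀ f, (inc f).card = 3)
    (t : F → Fin 3 → V) (ht : ∀ f i, t f i ∈ inc f) :
    ∃ v : V, 6 ≤ (Finset.univ.filter (fun q : F × Fin 3 => t q.1 q.2 = v)).card := by
  by_contra h
  push_neg at h
  have hsum : (Finset.univ : Finset (F × Fin 3)).card
      = ∑ v : V, (Finset.univ.filter (fun q : F × Fin 3 => t q.1 q.2 = v)).card := by
    exact Finset.card_eq_sum_card_fiberwise (fun q _ => Finset.mem_univ _)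
  have hcard : (Finset.univ : Finset (F × Fin 3)).card = (2 * n - 4) * 3 := by
    simp [Finset.card_univ, hF]
  have hle : ∑ v : V, (Finset.univ.filter (fun q : F × Fin 3 => t q.1 q.2 = v)).card
      ≤ ∑ _v : V, 5 := by
    apply Finset.sum_le_sum
    intro v _
    exact Nat.lt_succ_iff.mp (h v)
  rw [hcard] at hsum
  rw [← hsum] at hle
  simp only [Finset.sum_const, smul_eq_mul, Finset.card_univ, hV] at hle
  omega
end

section
/- In a bipolar orientation (st-orientation) of a 2-connected plane graph, every vertex other than the source s and the sink t has both an incoming and an outgoing edge, and around every such vertex the incoming edges appear consecutively in the cyclic order, as do the outgoing edges. -/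
open SimpleGraph

/-- Reversal of darts, as a permutation. -/
def dartRev {V : Type*} (G : SimpleGraph V) : Equiv.Perm G.Dart :=
  ⟨SimpleGraph.Dart.symm, SimpleGraph.Dart.symm,
    fun d => d.symm_symm, fun d => d.symm_symm⟩

/-- The number of cycles of a permutation, counting fixed points as cycles. -/
noncomputable def numCycles {α : Type*} [Fintype α] [DecidableEq α]
    (σ : Equiv.Perm α) : ℕ :=
  σ.cycleType.card + {x : α | σ x = x}.ncard

/-- A rotation system (combinatorial embedding) on a graph: a permutation of the darts
whose orbits are exactly the sets of darts leaving a common vertex, giving the cyclic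
order of the edges around each vertex. -/
structure RotationSystem {V : Type*} [Fintype V] [DecidableEq V]
    (G : SimpleGraph V) [DecidableRel G.Adj] where
  σ : Equiv.Perm G.Dart
  fst_fixed : ∀ d : G.Dart, (σ d).toProd.1 = d.toProd.1
  orbit_eq : ∀ d d' : G.Dart, d.toProd.1 = d'.toProd.1 → σ.SameCycle d d'

/-- The face permutation of a rotation system: its orbits are the faces. -/
def RotationSystem.facePerm {V : Type*} [Fintype V] [DecidableEq V]
    {G : SimpleGraph V} [DecidableRel G.Adj] (R : RotationSystem G) :
    Equiv.Perm G.Dart :=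
  R.σ * dartRev G

/-- A rotation system is planar (describes a plane graph) when it satisfies Euler's
formula: `#vertices − #edges + #faces = 2`. -/
noncomputable def RotationSystem.IsPlanar {V : Type*} [Fintype V] [DecidableEq V]
    {G : SimpleGraph V} [DecidableRel G.Adj] (R : RotationSystem G) : Prop :=
  (Fintype.card V : ℤ) - (G.edgeFinset.card : ℤ) + (numCycles R.facePerm : ℤ) = 2

/-!
Acyclicity forces every face, an orbit of `σ * dartRev`, to contain both forward and backward
darts, hence a forward-to-backward corner. Counting corners of faces, the number of
backward-to-forward switches in the rotations around all vertices is at most `#E - #F`, which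
is `#V - 2` by Euler's formula. Every vertex other than `s` and `t` has a switch, so none has
more than one.
-/

open Finset

namespace Equiv.Perm

variable {α : Type*}

theorem SameCycle.exists_transition [Finite α] {σ : Perm α} {p : α → Prop} {x y : α}
    (hxy : σ.SameCycle x y) (hx : p x) (hy : ¬ p y) :
    ∃ z, σ.SameCycle x z ∧ p z ∧ ¬ p (σ z) := by
  by_contra! hclosed
  obtain ⟨n, rfl⟩ := hxy.exists_nat_pow_eq
  suffices ∀ k : ℕ, p ((σ ^ k) x) from hy (this n)
  intro k
  induction k with
  | zero => exact hx
  | succ k ih =>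
    rw [pow_succ', Perm.mul_apply]
    exact hclosed _ (sameCycle_pow_right.2 (SameCycle.refl σ x)) ih

end Equiv.Perm

theorem numCycles_le_card_transitions {α : Type*} [Fintype α] [DecidableEq α]
    (σ : Equiv.Perm α) (p : α → Prop) [DecidablePred p]
    (h : ∀ x, ∃ z, σ.SameCycle x z ∧ p z ∧ ¬ p (σ z)) :
    numCycles σ ≤ #{z | p z ∧ ¬ p (σ z)} := by
  have hfix : {x | σ x = x} = ∅ := by
    refine Set.eq_empty_of_forall_notMem fun x (hx : σ x = x) => ?_
    obtain ⟨z, hxz, hz, hσz⟩ := h x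
    obtain ⟨k, rfl⟩ := hxz.exists_nat_pow_eq
    rw [Equiv.Perm.pow_apply_eq_self_of_apply_eq_self hx k, hx] at hσz
    rw [Equiv.Perm.pow_apply_eq_self_of_apply_eq_self hx k] at hz
    exact hσz hz
  rw [numCycles, hfix, Set.ncard_empty, add_zero, Equiv.Perm.cycleType_def,
    Multiset.card_map]
  refine card_le_card_of_surjOn σ.cycleOf fun c hc => ?_
  obtain ⟨x, hx⟩ := (Equiv.Perm.mem_cycleFactorsFinset_iff.1 hc).1.nonempty_support
  obtain ⟨z, hxz, hz, hσz⟩ := h x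
  refine ⟨z, by simpa using ⟨hz, hσz⟩, ?_⟩
  rw [← hxz.cycleOf_eq, ← Equiv.Perm.cycle_is_cycleOf hx hc]

theorem Relation.transGen_self_of_periodic {α : Type*} {r : α → α → Prop} {f : ℕ → α}
    {n : ℕ} (hn : 0 < n) (hf : f n = f 0) (h : ∀ k, r (f k) (f (k + 1))) :
    Relation.TransGen r (f 0) (f 0) := by
  have hpath : ∀ k, Relation.TransGen r (f 0) (f (k + 1)) := by
    intro k
    induction k with
    | zero => exact .single (h 0)
    | succ k ih => exact ih.tail (h (k + 1))
  obtain ⟨m, rfl⟩ : ∃ m, n = m + 1 := ⟨n - 1, by omega⟩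
  simpa only [hf] using hpath m

theorem SimpleGraph.card_filter_dart_eq_card_edgeFinset {V : Type*} [Fintype V]
    {G : SimpleGraph V} [DecidableRel G.Adj] {ori : G.Dart → Prop} [DecidablePred ori]
    (hori : ∀ d : G.Dart, ori d ↔ ¬ ori d.symm) :
    #{d : G.Dart | ori d} = #G.edgeFinset := by
  have hback : #{d : G.Dart | ¬ ori d} = #{d : G.Dart | ori d} :=
    card_equiv (dartRev G) fun d => by simp [dartRev, hori d]
  have hsplit : #{d : G.Dart | ori d} + #{d : G.Dart | ¬ ori d} = Fintype.card G.Dart :=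
    card_filter_add_card_filter_not ori
  rw [dart_card_eq_twice_card_edges] at hsplit
  omega

def SimpleGraph.OrientedAdj {V : Type*} {G : SimpleGraph V} (ori : G.Dart → Prop)
    (a b : V) : Prop :=
  ∃ d : G.Dart, ori d ∧ d.fst = a ∧ d.snd = b

namespace RotationSystem

variable {V : Type*} [Fintype V] [DecidableEq V] {G : SimpleGraph V} [DecidableRel G.Adj]
  (R : RotationSystem G)

theorem fst_facePerm (d : G.Dart) : (R.facePerm d).fst = d.snd := by
  simp [facePerm, dartRev, R.fst_fixed]

theorem facePerm_symm (d : G.Dart) : R.facePerm d.symm = R.σ d := by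
  simp [facePerm, dartRev]

theorem fst_eq_of_sameCycle {d d' : G.Dart} (h : R.σ.SameCycle d d') : d'.fst = d.fst := by
  obtain ⟨k, rfl⟩ := h.exists_nat_pow_eq
  induction k with
  | zero => rfl
  | succ k ih =>
    rw [pow_succ', Equiv.Perm.mul_apply, R.fst_fixed]
    exact ih (Equiv.Perm.sameCycle_pow_right.2 (.refl _ _))

/-- Consecutive darts of a face form a closed walk. -/
theorem exists_sameCycle_facePerm_not {r : V → V → Prop}
    (hr : ∀ v, ¬ Relation.TransGen r v v) {q : G.Dart → Prop}
    (hq : ∀ d, q d → r d.fst d.snd) (e : G.Dart) :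
    ∃ z, R.facePerm.SameCycle e z ∧ ¬ q z := by
  by_contra! hface
  have hq' : ∀ k : ℕ, q ((R.facePerm ^ k) e) := fun k =>
    hface _ (Equiv.Perm.sameCycle_pow_right.2 (.refl _ _))
  refine hr _ (Relation.transGen_self_of_periodic (f := fun k => ((R.facePerm ^ k) e).fst)
    (orderOf_pos R.facePerm) (by simp [pow_orderOf_eq_one]) fun k => ?_)
  simpa only [pow_succ', Equiv.Perm.mul_apply, fst_facePerm] using hq _ (hq' k)

variable {ori : G.Dart → Prop}

theorem exists_facePerm_transition (hori : ∀ d : G.Dart, ori d ↔ ¬ ori d.symm)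
    (hacyclic : ∀ v, ¬ Relation.TransGen (OrientedAdj ori) v v) (e : G.Dart) :
    ∃ z, R.facePerm.SameCycle e z ∧ ori z ∧ ¬ ori (R.facePerm z) := by
  have hacyclic' : ∀ v, ¬ Relation.TransGen (Function.swap (OrientedAdj ori)) v v :=
    fun v h => hacyclic v (Relation.transGen_swap.1 h)
  obtain ⟨x, hex, hx⟩ := R.exists_sameCycle_facePerm_not hacyclic' (q := fun d => ¬ ori d)
    (fun d hd => ⟨d.symm, by rwa [hori, Dart.symm_symm], rfl, rfl⟩) e
  obtain ⟨y, hey, hy⟩ := R.exists_sameCycle_facePerm_not hacyclic (q := ori)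
    (fun d hd => ⟨d, hd, rfl, rfl⟩) e
  obtain ⟨z, hxz, hz⟩ := (hex.symm.trans hey).exists_transition (not_not.1 hx) hy
  exact ⟨z, hex.trans hxz, hz⟩

/-- Each face contains a forward-to-backward corner, so there are at most as many faces as
such corners; the corners `e, R.facePerm e` with both darts forward correspond, via
`d = e.symm`, to the backward-to-forward switches `d, R.σ d` around the vertices. -/
theorem card_switches_add_numCycles_le [DecidablePred ori]
    (hori : ∀ d : G.Dart, ori d ↔ ¬ ori d.symm)
    (hacyclic : ∀ v, ¬ Relation.TransGen (OrientedAdj ori) v v) :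
    #{d | ¬ ori d ∧ ori (R.σ d)} + numCycles R.facePerm ≤ #G.edgeFinset := by
  have hswitch : #{d | ¬ ori d ∧ ori (R.σ d)} = #{e | ori e ∧ ori (R.facePerm e)} :=
    card_equiv (dartRev G) fun d => by simp [dartRev, facePerm_symm, hori d]
  have hfaces := numCycles_le_card_transitions R.facePerm ori
    (R.exists_facePerm_transition hori hacyclic)
  have hsplit := card_filter_add_card_filter_not (s := {e : G.Dart | ori e})
    fun e => ori (R.facePerm e)
  rw [filter_filter, filter_filter, card_filter_dart_eq_card_edgeFinset hori] at hsplit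
  omega

theorem card_switches_add_two_le [DecidablePred ori] (hplanar : R.IsPlanar)
    (hori : ∀ d : G.Dart, ori d ↔ ¬ ori d.symm)
    (hacyclic : ∀ v, ¬ Relation.TransGen (OrientedAdj ori) v v) :
    #{d | ¬ ori d ∧ ori (R.σ d)} + 2 ≤ Fintype.card V := by
  have := R.card_switches_add_numCycles_le hori hacyclic
  rw [IsPlanar] at hplanar
  omega

theorem exists_switch (hori : ∀ d : G.Dart, ori d ↔ ¬ ori d.symm) {v : V}
    {din dout : G.Dart} (hdin : ori din) (hin : din.snd = v) (hdout : ori dout)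
    (hout : dout.fst = v) :
    ∃ d : G.Dart, d.fst = v ∧ ¬ ori d ∧ ori (R.σ d) := by
  have hsc : R.σ.SameCycle din.symm dout := R.orbit_eq _ _ (by simp [hin, hout])
  obtain ⟨d, hd, hback, hfwd⟩ :=
    hsc.exists_transition (p := fun d => ¬ ori d) ((hori din).1 hdin) (not_not.2 hdout)
  exact ⟨d, (R.fst_eq_of_sameCycle hd).trans (by simp [hin]), hback, not_not.1 hfwd⟩

end RotationSystem

theorem le_one_of_sum_add_two_le {V : Type*} [Fintype V] [DecidableEq V] {f : V → ℕ}
    {s t : V} (hsum : ∑ v, f v + 2 ≤ Fintype.card V)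
    (hint : ∀ v, v ≠ s → v ≠ t → 1 ≤ f v) (v : V) : f v ≤ 1 := by
  have hrest : #((univ.erase v) \ {s, t}) ≤ ∑ u ∈ univ.erase v, f u := by
    calc #((univ.erase v) \ {s, t})
        = ∑ u ∈ (univ.erase v) \ {s, t}, 1 := (card_eq_sum_ones _)
      _ ≤ ∑ u ∈ (univ.erase v) \ {s, t}, f u := sum_le_sum fun u hu => by
          simp only [mem_sdiff, mem_insert, mem_singleton, not_or] at hu
          exact hint u hu.2.1 hu.2.2
      _ ≤ ∑ u ∈ univ.erase v, f u := sum_le_sum_of_subset sdiff_subset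
  have hcard : #(univ.erase v) ≤ #((univ.erase v) \ {s, t}) + 2 :=
    card_le_card_sdiff_add_card.trans (add_le_add_right card_le_two _)
  rw [← add_sum_erase _ _ (mem_univ v)] at hsum
  rw [card_erase_of_mem (mem_univ v), card_univ] at hcard
  omega

theorem stmt_13_general {V : Type*} [Fintype V] [DecidableEq V]
    (G : SimpleGraph V) [DecidableRel G.Adj]
    (R : RotationSystem G) (hplanar : R.IsPlanar)
    (ori : G.Dart → Prop)
    (hori : ∀ d : G.Dart, ori d ↔ ¬ ori d.symm)
    (hacyclic : ∀ v : V, ¬ Relation.TransGen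
      (fun a b : V => ∃ d : G.Dart, ori d ∧ d.toProd.1 = a ∧ d.toProd.2 = b) v v)
    (s t : V)
    (hsource : ∀ v : V, (¬ ∃ d : G.Dart, ori d ∧ d.toProd.2 = v) ↔ v = s)
    (hsink : ∀ v : V, (¬ ∃ d : G.Dart, ori d ∧ d.toProd.1 = v) ↔ v = t) :
    (∀ v : V, v ≠ s → v ≠ t →
      (∃ d : G.Dart, ori d ∧ d.toProd.2 = v) ∧ (∃ d : G.Dart, ori d ∧ d.toProd.1 = v)) ∧
    (∀ v : V,
      {d : G.Dart | d.toProd.1 = v ∧ ¬ ori d ∧ ori (R.σ d)}.ncard ≤ 1) := by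
  classical
  have hin (v : V) (hv : v ≠ s) : ∃ d : G.Dart, ori d ∧ d.snd = v :=
    not_not.1 (mt (hsource v).1 hv)
  have hout (v : V) (hv : v ≠ t) : ∃ d : G.Dart, ori d ∧ d.fst = v :=
    not_not.1 (mt (hsink v).1 hv)
  refine ⟨fun v hs ht => ⟨hin v hs, hout v ht⟩, fun v => ?_⟩
  have hsum : ∑ v, #{d : G.Dart | d.fst = v ∧ ¬ ori d ∧ ori (R.σ d)} + 2 ≤ Fintype.card V := by
    have := R.card_switches_add_two_le hplanar hori hacyclic
    rw [card_eq_sum_card_fiberwise (f := fun d : G.Dart => d.fst) (t := univ) (by simp)] at this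
    simpa only [filter_filter, and_comm] using this
  rw [Set.ncard_eq_toFinset_card', Set.toFinset_ofPred]
  refine le_one_of_sum_add_two_le hsum (s := s) (t := t) (fun u hs ht => ?_) v
  obtain ⟨din, hdin, hin_snd⟩ := hin u hs
  obtain ⟨dout, hdout, hout_fst⟩ := hout u ht
  obtain ⟨d, hd⟩ := R.exists_switch hori hdin hin_snd hdout hout_fst
  exact card_pos.2 ⟨d, mem_filter.2 ⟨mem_univ d, hd⟩⟩

/-- In a bipolar orientation (st-orientation) `ori` of a 2-connected plane graph
(a plane graph given by a planar rotation system `R`): every vertex other than the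
source `s` and the sink `t` has both an incoming and an outgoing edge, and around
every vertex the incoming darts appear consecutively in the cyclic order `R.σ`, as do
the outgoing darts (i.e. there is at most one switch from incoming to outgoing). -/
theorem stmt_13 {V : Type*} [Fintype V] [DecidableEq V]
    (G : SimpleGraph V) [DecidableRel G.Adj]
    (R : RotationSystem G) (hplanar : R.IsPlanar)
    (hcard : 3 ≤ Fintype.card V)
    (h2conn : ∀ v : V, (G.induce {u : V | u ≠ v}).Connected)
    (ori : G.Dart → Prop)
    (hori : ∀ d : G.Dart, ori d ↔ ¬ ori d.symm)
    (hacyclic : ∀ v : V, ¬ Relation.TransGen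
      (fun a b : V => ∃ d : G.Dart, ori d ∧ d.toProd.1 = a ∧ d.toProd.2 = b) v v)
    (s t : V)
    (hsource : ∀ v : V, (¬ ∃ d : G.Dart, ori d ∧ d.toProd.2 = v) ↔ v = s)
    (hsink : ∀ v : V, (¬ ∃ d : G.Dart, ori d ∧ d.toProd.1 = v) ↔ v = t) :
    (∀ v : V, v ≠ s → v ≠ t →
      (∃ d : G.Dart, ori d ∧ d.toProd.2 = v) ∧ (∃ d : G.Dart, ori d ∧ d.toProd.1 = v)) ∧
    (∀ v : V,
      {d : G.Dart | d.toProd.1 = v ∧ ¬ ori d ∧ ori (R.σ d)}.ncard ≤ 1) :=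
  stmt_13_general G R hplanar ori hori hacyclic s t hsource hsink
end
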